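/- Let A be a finite set, 2 ≤ h ≤ |A|, and let ρ ⊆ A^h be totally reflexive, totally symmetric, with ρ ≠ ι_h^A and ρ ≠ A^h. Suppose that for every h-element subset D = {d_1,…,d_h} of A with (d_1,…,d_h) ∉ ρ there exist n ≥ 1 and an n-ary operation q ∈ Pol(ρ) whose restriction to D^n takes all values of A. Then Pol(ρ) is a maximal clone on A. -/
import Mathlib


/-- An `n`-ary operation on `A`. -/
abbrev Op (A : Type*) (n : ℕ) : Type _ := (Fin n → A) → A

/-- A family of sets of finitary operations is a clone if it contains all projections
and is closed under composition. -/
def IsClone {A : Type*} (C : ∀ n, Set (Op A n)) : Prop :=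
  (∀ (n : ℕ) (i : Fin n), (fun v : Fin n → A => v i) ∈ C n) ∧
  (∀ (n k : ℕ) (f : Op A n) (g : Fin n → Op A k),
    f ∈ C n → (∀ i, g i ∈ C k) → (fun v : Fin k → A => f (fun i => g i v)) ∈ C k)

/-- A clone is maximal if it is proper and any clone containing it is itself or everything. -/
def IsMaximalClone {A : Type*} (C : ∀ n, Set (Op A n)) : Prop :=
  IsClone C ∧ C ≠ (fun _ => Set.univ) ∧
  ∀ D : ∀ n, Set (Op A n), IsClone D → (∀ n, C n ⊆ D n) →
    D = C ∨ D = (fun _ => Set.univ)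

/-- An `n`-ary operation preserves an `h`-ary relation `ρ`. -/
def Preserves {A : Type*} {n h : ℕ} (f : Op A n) (ρ : Set (Fin h → A)) : Prop :=
  ∀ r : Fin n → Fin h → A, (∀ i, r i ∈ ρ) → (fun j : Fin h => f (fun i => r i j)) ∈ ρ

/-- The polymorphism clone of a relation. -/
def Pol {A : Type*} {h : ℕ} (ρ : Set (Fin h → A)) : ∀ n, Set (Op A n) :=
  fun n => {f | Preserves f ρ}

/-- The relation `ι_h^A` of tuples with two equal coordinates. -/
def iotaRel (A : Type*) (h : ℕ) : Set (Fin h → A) :=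
  {v | ∃ i j : Fin h, i ≠ j ∧ v i = v j}

/-- A relation is totally reflexive if it contains `ι_h^A`. -/
def TotallyReflexive {A : Type*} {h : ℕ} (ρ : Set (Fin h → A)) : Prop :=
  iotaRel A h ⊆ ρ

/-- A relation is totally symmetric if it is closed under permutations of coordinates. -/
def TotallySymmetric {A : Type*} {h : ℕ} (ρ : Set (Fin h → A)) : Prop :=
  ∀ (σ : Equiv.Perm (Fin h)) (v : Fin h → A), v ∈ ρ → (fun i => v (σ i)) ∈ ρ

lemma pol_isClone {A : Type*} {h : ℕ} (ρ : Set (Fin h → A)) : IsClone (Pol ρ) := by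
  constructor
  · intro n i r hr
    exact hr i
  · intro n k f g hf hg r hr
    exact hf (fun i j => g i (fun p => r p j)) (fun i => hg i r hr)

lemma row_mem_pol {A : Type*} {h k : ℕ} {ρ : Set (Fin h → A)}
    (htr : TotallyReflexive ρ) (hts : TotallySymmetric ρ)
    {r : Fin h → A} (hr : r ∈ ρ) (J : (Fin k → A) → Fin h) :
    (fun x : Fin k → A => r (J x)) ∈ Pol ρ k := by
  intro w hw
  set σ : Fin h → Fin h := fun j => J (fun p => w p j) with hσ
  by_cases hinj : Function.Injective σ
  · have hb : Function.Bijective σ := Finite.injective_iff_bijective.mp hinj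
    exact hts (Equiv.ofBijective σ hb) r hr
  · simp only [Function.Injective, not_forall] at hinj
    obtain ⟨j1, j2, heq, hne⟩ := hinj
    exact htr ⟨j1, j2, hne, congrArg r heq⟩

/-- A completeness criterion: if for every `h`-element subset `D` forming a tuple outside `ρ`
there is `q ∈ Pol ρ` taking all values of `A` on `D^n`, then `Pol ρ` is a maximal clone. -/
theorem maximal_of_surjective_on_D {A : Type*} [Fintype A] (h : ℕ)
    (hh2 : 2 ≤ h) (hhA : h ≤ Fintype.card A) (ρ : Set (Fin h → A))
    (htr : TotallyReflexive ρ) (hts : TotallySymmetric ρ)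
    (hne1 : ρ ≠ iotaRel A h) (hne2 : ρ ≠ Set.univ)
    (hq : ∀ d : Fin h → A, Function.Injective d → d ∉ ρ →
      ∃ n : ℕ, 1 ≤ n ∧ ∃ q : Op A n, Preserves q ρ ∧
        ∀ a : A, ∃ v : Fin n → A, (∀ i, ∃ j, v i = d j) ∧ q v = a) :
    IsMaximalClone (Pol ρ) := by
  refine ⟨pol_isClone ρ, ?_, ?_⟩
  · -- Pol ρ is proper
    obtain ⟨e, he, heni⟩ : ∃ e ∈ ρ, e ∉ iotaRel A h := by
      by_contra hc
      push_neg at hc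
      exact hne1 (Set.Subset.antisymm hc htr)
    obtain ⟨d0, hd0⟩ : ∃ d0, d0 ∉ ρ := by
      by_contra hc
      push_neg at hc
      exact hne2 (Set.eq_univ_of_forall hc)
    have einj : Function.Injective e := by
      intro i j hij
      by_contra hne
      exact heni ⟨i, j, hne, hij⟩
    classical
    set f : A → A := fun a => if hx : ∃ j, e j = a then d0 hx.choose else a with hf
    have hfe : ∀ j, f (e j) = d0 j := by
      intro j
      have hx : ∃ j', e j' = e j := ⟨j, rfl⟩
      have : hx.choose = j := einj hx.choose_spec
      simp only [hf, dif_pos hx, this]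
    intro heq
    have h1 : Pol ρ 1 = Set.univ := congrFun heq 1
    have hmem : (fun v : Fin 1 → A => f (v 0)) ∈ Pol ρ 1 := by
      rw [h1]; trivial
    have := hmem (fun _ => e) (fun _ => he)
    simp only [hfe] at this
    exact hd0 this
  · intro D hD hsub
    by_cases hDP : ∀ n, D n = Pol ρ n
    · left
      funext n
      exact hDP n
    · right
      push_neg at hDP
      obtain ⟨m, hm⟩ := hDP
      obtain ⟨g, hgD, hgP⟩ := Set.exists_of_ssubset ((hsub m).ssubset_of_ne hm.symm)
      simp only [Pol, Set.mem_setOf_eq, Preserves, not_forall] at hgP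
      obtain ⟨r, hri, hdρ⟩ := hgP
      set d : Fin h → A := fun j => g (fun i => r i j) with hd
      have dinj : Function.Injective d := by
        intro j1 j2 hj
        by_contra hne
        exact hdρ (htr ⟨j1, j2, hne, hj⟩)
      obtain ⟨n, -, q, hqP, hqsurj⟩ := hq d dinj hdρ
      funext k
      ext f
      simp only [Set.mem_univ, iff_true]
      classical
      choose va hva hqa using hqsurj
      choose Jd hJd using hva
      have key : (fun x : Fin k → A =>
          q (fun i => g (fun l => r l (Jd (f x) i)))) ∈ D k := by
        refine hD.2 n k q _ (hsub n hqP) (fun i => ?_)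
        exact hD.2 m k g _ hgD
          (fun l => hsub k (row_mem_pol htr hts (hri l) (fun x => Jd (f x) i)))
      have hfeq : f = fun x : Fin k → A =>
          q (fun i => g (fun l => r l (Jd (f x) i))) := by
        funext x
        have h1 : (fun i => g (fun l => r l (Jd (f x) i))) = va (f x) := by
          funext i
          exact (hJd (f x) i).symm
        rw [h1, hqa]
      rw [hfeq]
      exact key
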